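/- arXiv:2410.23809 — 6 statements merged into one kernel-verified Lean document; each statement's English description precedes it below -/
import Mathlib

section
/- Let E be the edge set of a non-crossing spanning tree on linearly ordered points p_1,...,p_n. Then the map ρ_E, assigning to each gap g_i the shortest edge of E covering g_i, is well-defined and is a bijection from the set of gaps {g_1,...,g_{n-1}} to E. -/
/- Non-crossing spanning trees on linearly ordered points p_0, ..., p_{n-1}.
An edge is a pair (a, b) of indices with a < b < n.
Gap k (for k + 1 < n) lies between points k and k+1. -/

namespace NCST

attribute [local instance] Classical.propDecidable

abbrev Edge := ℕ × ℕ

/-- `e` covers `f`. -/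
def covers (e f : Edge) : Prop := e.1 ≤ f.1 ∧ f.2 ≤ e.2

/-- `e` covers the gap between points `k` and `k+1`. -/
def coversGap (e : Edge) (k : ℕ) : Prop := e.1 ≤ k ∧ k + 1 ≤ e.2

/-- Two edges cross: their endpoints interleave in the linear order. -/
def crosses (e f : Edge) : Prop :=
  (e.1 < f.1 ∧ f.1 < e.2 ∧ e.2 < f.2) ∨ (f.1 < e.1 ∧ e.1 < f.2 ∧ f.2 < e.2)

/-- The length of an edge. -/
def elen (e : Edge) : ℕ := e.2 - e.1

/-- The graph on the `n` points induced by an edge set. -/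
def graphOf (n : ℕ) (E : Finset Edge) : SimpleGraph (Fin n) :=
  SimpleGraph.fromRel (fun a b => ((a : ℕ), (b : ℕ)) ∈ E)

def ValidEdges (n : ℕ) (E : Finset Edge) : Prop := ∀ e ∈ E, e.1 < e.2 ∧ e.2 < n

def NonCrossing (E : Finset Edge) : Prop := ∀ e ∈ E, ∀ f ∈ E, ¬ crosses e f

/-- `E` is the edge set of a non-crossing spanning tree on the points `0, …, n-1`. -/
def IsNCSpanningTree (n : ℕ) (E : Finset Edge) : Prop :=
  ValidEdges n E ∧ NonCrossing E ∧ (graphOf n E).IsTree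

/-- `ρ` assigns to each gap `k` (with `k + 1 < n`) a shortest edge of `E` covering it. -/
def IsRho (n : ℕ) (E : Finset Edge) (ρ : ℕ → Edge) : Prop :=
  ∀ k, k + 1 < n →
    ρ k ∈ E ∧ coversGap (ρ k) k ∧ ∀ f ∈ E, coversGap f k → elen (ρ k) ≤ elen f

/-- `ρ` is a bijection from the gaps `{0, …, n-2}` onto `E`. -/
def RhoBij (n : ℕ) (E : Finset Edge) (ρ : ℕ → Edge) : Prop :=
  (∀ k l, k + 1 < n → l + 1 < n → ρ k = ρ l → k = l) ∧
  (∀ e ∈ E, ∃ k, k + 1 < n ∧ ρ k = e)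

/-- `e` is a short edge for the gap `k`. -/
def isShort (e : Edge) (k : ℕ) : Prop := e = (k, k + 1)

/-- `e` is a near edge for the gap `k`: it covers the gap and shares exactly one
endpoint with `{k, k+1}`. -/
def isNear (e : Edge) (k : ℕ) : Prop :=
  coversGap e k ∧ ((e.1 = k ∧ e.2 ≠ k + 1) ∨ (e.1 ≠ k ∧ e.2 = k + 1))

/-- `e` is a far edge for the gap `k`: it covers the gap and shares no endpoint
with `{k, k+1}`. -/
def isFar (e : Edge) (k : ℕ) : Prop := coversGap e k ∧ e.1 ≠ k ∧ e.2 ≠ k + 1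

/-- The edges of `E` not covered by any other edge of `E`. -/
noncomputable def Uncovered (E : Finset Edge) : Finset Edge :=
  E.filter (fun e => ∀ f ∈ E, f ≠ e → ¬ covers f e)

/-- Gap `i` is a near-near gap: the paired edges differ and are both near. -/
def NearNear (n : ℕ) (ρ ρ' : ℕ → Edge) (i : ℕ) : Prop :=
  i + 1 < n ∧ ρ i ≠ ρ' i ∧ isNear (ρ i) i ∧ isNear (ρ' i) i

/-- Directed edge `g_i → g_j` of the conflict graph `H(T,T')`. -/
def conflictEdge (ρ ρ' : ℕ → Edge) (i j : ℕ) : Prop :=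
  i ≠ j ∧
  (crosses (ρ i) (ρ' j) ∨
   (covers (ρ' j) (ρ i) ∧ coversGap (ρ i) j) ∨
   (covers (ρ i) (ρ' j) ∧ coversGap (ρ' j) i))

/-- The subgraph of the directed graph `R` induced on `S` has no directed cycle. -/
def AcyclicOn (R : ℕ → ℕ → Prop) (S : Set ℕ) : Prop :=
  ∀ a, ¬ Relation.TransGen (fun x y => x ∈ S ∧ y ∈ S ∧ R x y) a a

/-- Two edges are adjacent: they share an endpoint. -/
def adjEdges (e f : Edge) : Prop :=
  e.1 = f.1 ∨ e.1 = f.2 ∨ e.2 = f.1 ∨ e.2 = f.2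


/-!
Among non-crossing edges, a shortest edge `e` covering a gap lies inside every other edge
covering that gap. If `e` were shortest for two gaps `k < l`, connectivity gives an edge joining
a point among `k+1, …, l` to a point outside; it covers gap `k` or gap `l` but does not contain
`e`. So the map is injective, and a tree on `n` points has exactly `n - 1` edges.
-/

def IsShortestCover (E : Finset Edge) (e : Edge) (k : ℕ) : Prop :=
  e ∈ E ∧ coversGap e k ∧ ∀ f ∈ E, coversGap f k → elen e ≤ elen f

section

variable {n : ℕ} {E : Finset Edge}

lemma exists_mem_separating (hc : (graphOf n E).Preconnected) (P : ℕ → Prop) {a b : ℕ}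
    (ha : a < n) (hb : b < n) (hPa : P a) (hPb : ¬ P b) :
    ∃ f ∈ E, (P f.1 ∧ ¬ P f.2) ∨ (¬ P f.1 ∧ P f.2) := by
  obtain ⟨w⟩ := hc ⟨a, ha⟩ ⟨b, hb⟩
  obtain ⟨d, -, hd₁, hd₂⟩ := w.exists_boundary_dart {x | P x.val} hPa hPb
  obtain ⟨-, hf | hf⟩ := d.adj
  · exact ⟨_, hf, Or.inl ⟨hd₁, hd₂⟩⟩
  · exact ⟨_, hf, Or.inr ⟨hd₂, hd₁⟩⟩

lemma exists_mem_coversGap (hV : ValidEdges n E) (hc : (graphOf n E).Preconnected)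
    {k : ℕ} (hk : k + 1 < n) : ∃ e ∈ E, coversGap e k := by
  obtain ⟨f, hf, hsep⟩ := exists_mem_separating hc (· ≤ k) (by omega) hk le_rfl (by omega)
  have := hV f hf
  exact ⟨f, hf, by unfold coversGap; omega⟩

lemma exists_isShortestCover (hV : ValidEdges n E) (hc : (graphOf n E).Preconnected)
    {k : ℕ} (hk : k + 1 < n) : ∃ e, IsShortestCover E e k := by
  obtain ⟨e₀, he₀⟩ := exists_mem_coversGap hV hc hk
  obtain ⟨e, he, hmin⟩ :=
    (E.filter (coversGap · k)).exists_min_image elen ⟨e₀, Finset.mem_filter.mpr he₀⟩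
  rw [Finset.mem_filter] at he
  exact ⟨e, he.1, he.2, fun f hf hfk => hmin f (Finset.mem_filter.mpr ⟨hf, hfk⟩)⟩

lemma IsShortestCover.nested {e f : Edge} {k : ℕ}
    (he : IsShortestCover E e k) (hf : f ∈ E) (hfk : coversGap f k) (hnc : ¬ crosses e f) :
    f.1 ≤ e.1 ∧ e.2 ≤ f.2 := by
  have hlen := he.2.2 f hf hfk
  have hek := he.2.1
  unfold coversGap at hek hfk
  unfold crosses at hnc
  unfold elen at hlen
  omega

lemma IsShortestCover.eq_of_isShortestCover (hV : ValidEdges n E)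
    (hNC : NonCrossing E) (hc : (graphOf n E).Preconnected) {e : Edge} {k l : ℕ}
    (hk : IsShortestCover E e k) (hl : IsShortestCover E e l) : k = l := by
  wlog hkl : k < l generalizing k l
  · obtain h | rfl := (not_lt.1 hkl).lt_or_eq
    exacts [(this hl hk h).symm, rfl]
  have hek := hk.2.1
  have hel := hl.2.1
  have hve := hV e hk.1
  unfold coversGap at hek hel
  obtain ⟨f, hf, hsep⟩ := exists_mem_separating hc (fun x => k + 1 ≤ x ∧ x ≤ l)
    (by omega) hve.2 ⟨le_rfl, hkl⟩ (by omega)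
  have hvf := hV f hf
  rcases hsep with ⟨⟨h₁, h₂⟩, h₃⟩ | ⟨h₃, h₁, h₂⟩
  · have := hl.nested hf ⟨h₂, by omega⟩ (hNC e hl.1 f hf)
    omega
  · have := hk.nested hf ⟨by omega, h₁⟩ (hNC e hk.1 f hf)
    omega

lemma card_eq_card_edgeFinset (hV : ValidEdges n E)
    [Fintype (graphOf n E).edgeSet] : E.card = (graphOf n E).edgeFinset.card := by
  refine Finset.card_bij (fun e he => s(⟨e.1, (hV e he).1.trans (hV e he).2⟩, ⟨e.2, (hV e he).2⟩))
    ?_ ?_ ?_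
  · intro e he
    have := hV e he
    rw [SimpleGraph.mem_edgeFinset, SimpleGraph.mem_edgeSet, graphOf, SimpleGraph.fromRel_adj]
    exact ⟨by simp only [ne_eq, Fin.mk.injEq]; omega, Or.inl he⟩
  · intro e₁ he₁ e₂ he₂ h
    have := hV e₁ he₁
    have := hV e₂ he₂
    simp only [Sym2.eq_iff, Fin.mk.injEq] at h
    ext <;> omega
  · intro s hs
    induction s using Sym2.ind with
    | _ a b =>
      rw [SimpleGraph.mem_edgeFinset, SimpleGraph.mem_edgeSet, graphOf,
        SimpleGraph.fromRel_adj] at hs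
      obtain ⟨-, h | h⟩ := hs
      · exact ⟨(a, b), h, rfl⟩
      · exact ⟨(b, a), h, Sym2.eq_swap⟩

lemma card_add_one_of_isTree (hV : ValidEdges n E)
    (hT : (graphOf n E).IsTree) : E.card + 1 = n := by
  have : Fintype (graphOf n E).edgeSet := Fintype.ofFinite _
  simpa [card_eq_card_edgeFinset hV] using hT.card_edgeFinset

end

/-- for a non-crossing spanning tree `E`, the map assigning to each
gap the shortest edge of `E` covering it is well-defined and a bijection from
the gaps onto `E`. -/
theorem stmt1 (n : ℕ) (E : Finset Edge) (hT : IsNCSpanningTree n E) :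
    ∃ ρ : ℕ → Edge, IsRho n E ρ ∧ RhoBij n E ρ := by
  obtain ⟨hV, hNC, hTree⟩ := hT
  have hc := hTree.connected.preconnected
  have hρ : ∀ k, ∃ e, k + 1 < n → IsShortestCover E e k := fun k =>
    if hk : k + 1 < n then (exists_isShortestCover hV hc hk).imp fun _ he _ => he
    else ⟨(0, 0), fun h => absurd h hk⟩
  choose ρ hρ using hρ
  have hinj : ∀ k l, k + 1 < n → l + 1 < n → ρ k = ρ l → k = l := fun k l hk hl h =>
    (hρ k hk).eq_of_isShortestCover hV hNC hc (h ▸ hρ l hl)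
  refine ⟨ρ, hρ, hinj, fun e he => ?_⟩
  have hgap : ∀ k ∈ Finset.range (n - 1), k + 1 < n := fun k hk => by
    have := Finset.mem_range.1 hk
    omega
  obtain ⟨k, hk, rfl⟩ := Finset.surjOn_of_injOn_of_card_le ρ
    (fun k hk => (hρ k (hgap k hk)).1) (fun k hk l hl => hinj k l (hgap k hk) (hgap l hl))
    (by rw [Finset.card_range, ← card_add_one_of_isTree hV hTree, Nat.add_sub_cancel]) he
  exact ⟨k, hgap k hk, rfl⟩

end NCST
end

section
/- Let T be the edge set of a non-crossing spanning tree on linearly ordered points p_1,...,p_n. Then for every edge e of T, the set of edges of T that cover e is totally ordered under the cover relation; equivalently, the cover relation on T is a partial order whose Hasse diagram is a rooted forest. -/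
/- Non-crossing spanning trees on linearly ordered points p_0, ..., p_{n-1}.
An edge is a pair (a, b) of indices with a < b < n.
Gap k (for k + 1 < n) lies between points k and k+1. -/

namespace NCST

attribute [local instance] Classical.propDecidable

/- If neither of `f`, `g` covers the other, one starts and ends strictly before the other;
since both contain the nondegenerate edge `e`, their endpoints then interleave. -/
theorem covers_total_of_not_crosses {e f g : Edge} (he : e.1 < e.2) (hfe : covers f e)
    (hge : covers g e) (hfg : ¬ crosses f g) : covers f g ∨ covers g f := by
  unfold covers at *
  unfold crosses at hfg
  omega

/-- in a non-crossing spanning tree, the set of edges covering any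
fixed edge is totally ordered under the cover relation. -/
theorem stmt2 (n : ℕ) (E : Finset Edge) (hT : IsNCSpanningTree n E) :
    ∀ e ∈ E, ∀ f ∈ E, ∀ g ∈ E,
      covers f e → covers g e → covers f g ∨ covers g f :=
  fun e he f hf g hg hfe hge =>
    covers_total_of_not_crosses (hT.1 e he).1 hfe hge (hT.2.1 f hf g hg)

end NCST
end

section
/- Let T be a non-crossing spanning tree on linearly ordered points p_1,...,p_n, let k ≥ 1 be the number of edges of T not covered by any other edge of T, let S be the set of short edges of T (edges e_i = ρ_T(g_i) equal to {p_i,p_{i+1}}), and let W be the set of far edges of T (edges e_i = ρ_T(g_i) sharing no endpoint with {p_i,p_{i+1}}). Then |S| ≥ k and |W| ≤ |S| - k. -/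
/- Non-crossing spanning trees on linearly ordered points p_0, ..., p_{n-1}.
An edge is a pair (a, b) of indices with a < b < n.
Gap k (for k + 1 < n) lies between points k and k+1. -/

namespace NCST

attribute [local instance] Classical.propDecidable

/-
Every gap `i` lies under the edge `ρ i`, and under `e = ρ i₀` the gaps other than `i₀` split into
the gap intervals of the maximal edges properly below `e`. There is at least one such edge when `e`
is near for `i₀` and at least two when it is far, so induction on the length gives, for every edge
`e`, at least one more short than far gap under `e`. The gaps of the whole tree split in the same
way into the intervals of the `k` uncovered edges; summing gives `|W| + k ≤ |S|`.
-/

lemma covers_or_covers_or_le_or_le_of_not_crosses {e f : Edge} (h : ¬ crosses e f) :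
    covers e f ∨ covers f e ∨ e.2 ≤ f.1 ∨ f.2 ≤ e.1 := by
  unfold crosses at h; unfold covers; omega

lemma covers_trans {e f g : Edge} (hef : covers e f) (hfg : covers f g) : covers e g := by
  unfold covers at *; omega

lemma elen_lt_of_covers {e f : Edge} (hf : f.1 < f.2) (hef : covers e f) (hne : e ≠ f) :
    elen f < elen e := by
  unfold covers elen at *
  have : e.1 ≠ f.1 ∨ e.2 ≠ f.2 := by
    by_contra! h; exact hne (Prod.ext h.1 h.2)
  omega

lemma NonCrossing.mono {P T : Finset Edge} (hT : NonCrossing T) (hPT : P ⊆ T) : NonCrossing P :=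
  fun e he f hf => hT e (hPT he) f (hPT hf)

lemma mem_of_mem_uncovered {P : Finset Edge} {e : Edge} (he : e ∈ Uncovered P) : e ∈ P :=
  (Finset.mem_filter.1 he).1

lemma exists_mem_uncovered_covers {P : Finset Edge} (hP : ∀ g ∈ P, g.1 < g.2) {f : Edge}
    (hf : f ∈ P) : ∃ g ∈ Uncovered P, covers g f := by
  obtain ⟨g, hg, hmax⟩ := (P.filter (covers · f)).exists_max_image elen
    ⟨f, Finset.mem_filter.2 ⟨hf, le_rfl, le_rfl⟩⟩
  rw [Finset.mem_filter] at hg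
  refine ⟨g, Finset.mem_filter.2 ⟨hg.1, fun h hh hne hhg => ?_⟩, hg.2⟩
  have := hmax h (Finset.mem_filter.2 ⟨hh, covers_trans hhg hg.2⟩)
  exact (elen_lt_of_covers (hP g hg.1) hhg hne).not_ge this

lemma sum_add_card_le_sum {ι : Type*} {s : Finset ι} {f g : ι → ℕ} (h : ∀ i ∈ s, f i + 1 ≤ g i) :
    ∑ i ∈ s, f i + s.card ≤ ∑ i ∈ s, g i := by
  simpa [Finset.sum_add_distrib] using Finset.sum_le_sum h

def gaps (e : Edge) : Finset ℕ := Finset.Ico e.1 e.2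

lemma mem_gaps {e : Edge} {i : ℕ} : i ∈ gaps e ↔ coversGap e i := by
  simp only [gaps, coversGap, Finset.mem_Ico]; omega

lemma gaps_subset_gaps_of_covers {e f : Edge} (h : covers e f) : gaps f ⊆ gaps e :=
  Finset.Ico_subset_Ico h.1 h.2

lemma pairwiseDisjoint_gaps_uncovered {P : Finset Edge} (hP : NonCrossing P) :
    (Uncovered P : Set Edge).PairwiseDisjoint gaps := by
  intro u hu u' hu' hne
  have hu'max := (Finset.mem_filter.1 hu').2 u (mem_of_mem_uncovered hu) hne
  have humax := (Finset.mem_filter.1 hu).2 u' (mem_of_mem_uncovered hu') hne.symm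
  rw [Function.onFun, Finset.disjoint_left]
  intro i hi hi'
  simp only [gaps, Finset.mem_Ico] at hi hi'
  rcases covers_or_covers_or_le_or_le_of_not_crosses
    (hP u (mem_of_mem_uncovered hu) u' (mem_of_mem_uncovered hu')) with h | h | h | h
  · exact hu'max h
  · exact humax h
  all_goals omega

lemma card_filter_biUnion_gaps_uncovered {P : Finset Edge} (hP : NonCrossing P) (p : ℕ → Prop) :
    (((Uncovered P).biUnion gaps).filter p).card = ∑ u ∈ Uncovered P, ((gaps u).filter p).card := by
  rw [Finset.filter_biUnion, Finset.card_biUnion]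
  exact (pairwiseDisjoint_gaps_uncovered hP).mono fun _ => Finset.filter_subset _ _

/-- `e.1 ≠ i₀` gives an edge of `M` under the gap `e.1`, `e.2 ≠ i₀ + 1` one under the gap `e.2 - 1`,
and they differ, since an edge under both gaps would be under `i₀`. -/
lemma ite_add_ite_le_card {M : Finset Edge} {e : Edge} {i₀ : ℕ}
    (hsplit : gaps e = insert i₀ (M.biUnion gaps)) (hi₀ : i₀ ∉ M.biUnion gaps) :
    (if e.1 ≠ i₀ then 1 else 0) + (if e.2 ≠ i₀ + 1 then 1 else 0) ≤ M.card := by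
  have hmem : i₀ ∈ gaps e := hsplit ▸ Finset.mem_insert_self _ _
  have hcover : ∀ j ∈ gaps e, j ≠ i₀ → ∃ g ∈ M, g.1 ≤ j ∧ j < g.2 := by
    intro j hj hne
    rw [hsplit, Finset.mem_insert, Finset.mem_biUnion] at hj
    simpa [gaps] using hj.resolve_left hne
  simp only [gaps, Finset.mem_biUnion, Finset.mem_Ico, not_exists, not_and] at hi₀ hmem hcover
  split_ifs with h₁ h₂ h₂
  · obtain ⟨g₁, hg₁, hg₁e⟩ := hcover e.1 (by omega) h₁
    obtain ⟨g₂, hg₂, hg₂e⟩ := hcover (e.2 - 1) (by omega) (by omega)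
    refine Finset.one_lt_card.2 ⟨g₁, hg₁, g₂, hg₂, fun h => ?_⟩
    subst h
    have := hi₀ g₁ hg₁ (by omega)
    omega
  · obtain ⟨g, hg, -⟩ := hcover e.1 (by omega) h₁
    exact Finset.card_pos.2 ⟨g, hg⟩
  · obtain ⟨g, hg, -⟩ := hcover (e.2 - 1) (by omega) (by omega)
    exact Finset.card_pos.2 ⟨g, hg⟩
  · exact Nat.zero_le _

lemma ite_isFar_add_one_le (e : Edge) (i : ℕ) :
    (if isFar e i then 1 else 0) + 1 ≤
      (if e.1 ≠ i then 1 else 0) + (if e.2 ≠ i + 1 then 1 else 0) + (if isShort e i then 1 else 0) := by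
  unfold isFar isShort
  split_ifs <;> simp_all [Prod.ext_iff]

noncomputable def properSubedges (T : Finset Edge) (e : Edge) : Finset Edge :=
  T.filter fun g => covers e g ∧ g ≠ e

lemma mem_properSubedges {T : Finset Edge} {e g : Edge} :
    g ∈ properSubedges T e ↔ g ∈ T ∧ covers e g ∧ g ≠ e :=
  Finset.mem_filter

section Tree

variable {n : ℕ} {T : Finset Edge} {ρ : ℕ → Edge}

lemma succ_lt_of_mem_gaps (hV : ValidEdges n T) {e : Edge} (he : e ∈ T) {i : ℕ}
    (hi : i ∈ gaps e) : i + 1 < n := by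
  have := (hV e he).2
  rw [mem_gaps] at hi; unfold coversGap at hi; omega

lemma range_eq_biUnion_gaps_uncovered (hV : ValidEdges n T) (hρ : IsRho n T ρ) :
    Finset.range (n - 1) = (Uncovered T).biUnion gaps := by
  ext i
  simp only [Finset.mem_range, Finset.mem_biUnion]
  constructor
  · intro hi
    obtain ⟨hmem, hgap, -⟩ := hρ i (by omega)
    obtain ⟨u, hu, hcov⟩ := exists_mem_uncovered_covers (fun g hg => (hV g hg).1) hmem
    exact ⟨u, hu, gaps_subset_gaps_of_covers hcov (mem_gaps.2 hgap)⟩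
  · rintro ⟨u, hu, hi⟩
    have := succ_lt_of_mem_gaps hV (mem_of_mem_uncovered hu) hi
    omega

lemma rho_mem_properSubedges (hV : ValidEdges n T) (hNC : NonCrossing T) (hρ : IsRho n T ρ)
    (hbij : RhoBij n T ρ) {e : Edge} {i₀ i : ℕ} (hi₀ : i₀ + 1 < n) (he : ρ i₀ = e)
    (hi : i ∈ gaps e) (hne : i ≠ i₀) : ρ i ∈ properSubedges T e := by
  obtain ⟨heT, -⟩ := hρ i₀ hi₀
  rw [he] at heT
  have hin := succ_lt_of_mem_gaps hV heT hi
  rw [mem_gaps] at hi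
  obtain ⟨hmem, hgap, hmin⟩ := hρ i hin
  have hρne : ρ i ≠ e := fun h => hne (hbij.1 i i₀ hin hi₀ (h.trans he.symm))
  have hlen : elen (ρ i) ≤ elen e := hmin e heT hi
  refine mem_properSubedges.2 ⟨hmem, ?_, hρne⟩
  rcases covers_or_covers_or_le_or_le_of_not_crosses (hNC e heT (ρ i) hmem) with h | h | h | h
  · exact h
  · exact absurd hlen (elen_lt_of_covers (hV e heT).1 h hρne).not_ge
  all_goals unfold coversGap at hi hgap; omega

lemma gaps_eq_insert_biUnion_gaps (hV : ValidEdges n T) (hNC : NonCrossing T)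
    (hρ : IsRho n T ρ) (hbij : RhoBij n T ρ) {e : Edge} {i₀ : ℕ} (hi₀ : i₀ + 1 < n)
    (he : ρ i₀ = e) :
    gaps e = insert i₀ ((Uncovered (properSubedges T e)).biUnion gaps) := by
  ext i
  simp only [Finset.mem_insert, Finset.mem_biUnion]
  constructor
  · intro hi
    by_cases hne : i = i₀
    · exact Or.inl hne
    right
    have hsub := rho_mem_properSubedges hV hNC hρ hbij hi₀ he hi hne
    obtain ⟨g, hg, hcov⟩ := exists_mem_uncovered_covers
      (fun g hg => (hV g (mem_properSubedges.1 hg).1).1) hsub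
    have hgap := (hρ i (succ_lt_of_mem_gaps hV (he ▸ (hρ i₀ hi₀).1) hi)).2.1
    exact ⟨g, hg, gaps_subset_gaps_of_covers hcov (mem_gaps.2 hgap)⟩
  · rintro (rfl | ⟨g, hg, hi⟩)
    · exact he ▸ mem_gaps.2 (hρ _ hi₀).2.1
    · exact gaps_subset_gaps_of_covers (mem_properSubedges.1 (mem_of_mem_uncovered hg)).2.1 hi

lemma not_mem_biUnion_gaps (hV : ValidEdges n T) (hρ : IsRho n T ρ) {e : Edge} {i₀ : ℕ}
    (hi₀ : i₀ + 1 < n) (he : ρ i₀ = e) :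
    i₀ ∉ (Uncovered (properSubedges T e)).biUnion gaps := by
  simp only [Finset.mem_biUnion, not_exists, not_and]
  intro g hg hi
  obtain ⟨hgT, hcov, hne⟩ := mem_properSubedges.1 (mem_of_mem_uncovered hg)
  have hle := he ▸ (hρ i₀ hi₀).2.2 g hgT (mem_gaps.1 hi)
  exact hle.not_gt (elen_lt_of_covers (hV g hgT).1 hcov hne.symm)

lemma card_filter_gaps_eq (hV : ValidEdges n T) (hNC : NonCrossing T) (hρ : IsRho n T ρ)
    (hbij : RhoBij n T ρ) {e : Edge} {i₀ : ℕ} (hi₀ : i₀ + 1 < n) (he : ρ i₀ = e)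
    (p : ℕ → Prop) :
    ((gaps e).filter p).card =
      ∑ g ∈ Uncovered (properSubedges T e), ((gaps g).filter p).card + if p i₀ then 1 else 0 := by
  have hNC' : NonCrossing (properSubedges T e) := hNC.mono (Finset.filter_subset _ _)
  rw [gaps_eq_insert_biUnion_gaps hV hNC hρ hbij hi₀ he, Finset.filter_insert,
    ← card_filter_biUnion_gaps_uncovered hNC' p]
  split_ifs
  · exact Finset.card_insert_of_notMem
      fun h => not_mem_biUnion_gaps hV hρ hi₀ he (Finset.mem_of_mem_filter _ h)
  · rfl

theorem card_filter_isFar_add_one_le (hV : ValidEdges n T) (hNC : NonCrossing T)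
    (hρ : IsRho n T ρ) (hbij : RhoBij n T ρ) {e : Edge} (he : e ∈ T) :
    ((gaps e).filter fun i => isFar (ρ i) i).card + 1 ≤
      ((gaps e).filter fun i => isShort (ρ i) i).card := by
  induction hl : elen e using Nat.strong_induction_on generalizing e with
  | _ m ih =>
  obtain ⟨i₀, hi₀, hρi₀⟩ := hbij.2 e he
  have hbelow := sum_add_card_le_sum (s := Uncovered (properSubedges T e)) fun g hg => by
    obtain ⟨hgT, hcov, hne⟩ := mem_properSubedges.1 (mem_of_mem_uncovered hg)
    exact ih _ (hl ▸ elen_lt_of_covers (hV g hgT).1 hcov hne.symm) hgT rfl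
  have hcard := ite_add_ite_le_card (gaps_eq_insert_biUnion_gaps hV hNC hρ hbij hi₀ hρi₀)
    (not_mem_biUnion_gaps hV hρ hi₀ hρi₀)
  have hlocal := ite_isFar_add_one_le e i₀
  rw [card_filter_gaps_eq hV hNC hρ hbij hi₀ hρi₀, card_filter_gaps_eq hV hNC hρ hbij hi₀ hρi₀]
  simp only [hρi₀]
  omega

end Tree

theorem stmt3_general (n : ℕ) (T : Finset Edge) (ρ : ℕ → Edge)
    (hT : IsNCSpanningTree n T) (hρ : IsRho n T ρ) (hbij : RhoBij n T ρ) :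
    (Uncovered T).card ≤ ((Finset.range (n - 1)).filter (fun k => isShort (ρ k) k)).card ∧
    ((Finset.range (n - 1)).filter (fun k => isFar (ρ k) k)).card + (Uncovered T).card ≤
      ((Finset.range (n - 1)).filter (fun k => isShort (ρ k) k)).card := by
  obtain ⟨hV, hNC, -⟩ := hT
  have hsplit (p : ℕ → Prop) : ((Finset.range (n - 1)).filter p).card =
      ∑ u ∈ Uncovered T, ((gaps u).filter p).card := by
    rw [range_eq_biUnion_gaps_uncovered hV hρ, card_filter_biUnion_gaps_uncovered hNC]
  have hsum := sum_add_card_le_sum fun u hu =>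
    card_filter_isFar_add_one_le hV hNC hρ hbij (mem_of_mem_uncovered hu)
  rw [hsplit fun k => isShort (ρ k) k, hsplit fun k => isFar (ρ k) k]
  omega

/-- if `T` is a non-crossing spanning tree with `k ≥ 1` uncovered
edges, `S` its set of short edges and `W` its set of far edges (indexed by their
gaps), then `|S| ≥ k` and `|W| ≤ |S| - k`. -/
theorem stmt3 (n : ℕ) (T : Finset Edge) (ρ : ℕ → Edge)
    (hT : IsNCSpanningTree n T) (hρ : IsRho n T ρ) (hbij : RhoBij n T ρ)
    (hk : 1 ≤ (Uncovered T).card) :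
    (Uncovered T).card ≤ ((Finset.range (n - 1)).filter (fun k => isShort (ρ k) k)).card ∧
    ((Finset.range (n - 1)).filter (fun k => isFar (ρ k) k)).card + (Uncovered T).card ≤
      ((Finset.range (n - 1)).filter (fun k => isShort (ρ k) k)).card :=
  stmt3_general n T ρ hT hρ hbij

end NCST
end

section
/- The diameter of the flip graph of non-crossing spanning trees on n points in convex position is monotone in n: for all n ≥ 1, diam(F_n) ≤ diam(F_{n+1}). -/
/-! Adding the boundary edge `(0, n)` embeds `F_n` into `F_{n+1}`, and this embedding has a
1-Lipschitz left inverse: identify the new point `n` with `0`, turning each edge `(a, n)` into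
`(0, a)`, except the edge to the smallest neighbour `m` of `n`, which is dropped. Non-crossing
makes this a non-crossing spanning tree again (an edge jumping over `m` would cross `(m, n)`), and
a flip in `F_{n+1}` moves the image by at most one flip. Hence
`dist(T, T') ≤ dist(T ∪ {(0, n)}, T' ∪ {(0, n)}) ≤ diam F_{n+1}`. -/

/- Non-crossing spanning trees on linearly ordered points p_0, ..., p_{n-1}.
An edge is a pair (a, b) of indices with a < b < n.
Gap k (for k + 1 < n) lies between points k and k+1. -/

namespace NCST

attribute [local instance] Classical.propDecidable

/-- Non-crossing spanning trees on `n` points in convex position (labeled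
circularly; crossing of chords is interleaving of labels). -/
def ConvexTree (n : ℕ) := {E : Finset Edge // IsNCSpanningTree n E}

/-- The flip graph `F_n`: two trees are adjacent iff they differ in exactly one edge. -/
def flipGraph (n : ℕ) : SimpleGraph (ConvexTree n) :=
  SimpleGraph.fromRel (fun T T' => (T.1 \ T'.1).card = 1 ∧ (T'.1 \ T.1).card = 1)

/-- The diameter of the flip graph `F_n`. -/
noncomputable def flipDiam (n : ℕ) : ℕ∞ :=
  ⨆ T : ConvexTree n, ⨆ T' : ConvexTree n, (flipGraph n).edist T T'

end NCST

namespace SimpleGraph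

variable {V W : Type*} {G : SimpleGraph V} {H : SimpleGraph W} {f : V → W} {u v : V}

lemma edist_map_le_length (hf : ∀ a b, G.Adj a b → H.Adj (f a) (f b) ∨ f a = f b)
    (p : G.Walk u v) : H.edist (f u) (f v) ≤ p.length := by
  induction p with
  | nil => simp
  | @cons a b c h p ih =>
    calc H.edist (f a) (f c) ≤ H.edist (f a) (f b) + H.edist (f b) (f c) := H.edist_triangle
      _ ≤ 1 + p.length := add_le_add (edist_le_one_iff_adj_or_eq.mpr (hf a b h)) ih
      _ = (Walk.cons h p).length := by rw [Walk.length_cons, Nat.cast_succ, add_comm]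

lemma edist_map_le (hf : ∀ a b, G.Adj a b → H.Adj (f a) (f b) ∨ f a = f b) (u v : V) :
    H.edist (f u) (f v) ≤ G.edist u v :=
  le_sInf (Set.forall_mem_range.2 (edist_map_le_length hf))

lemma Walk.reachable_map_of_forall_dart (p : G.Walk u v)
    (hp : ∀ d ∈ p.darts, H.Reachable (f d.fst) (f d.snd)) : H.Reachable (f u) (f v) := by
  induction p with
  | nil => rfl
  | cons h p ih =>
    rw [Walk.darts_cons, List.forall_mem_cons] at hp
    exact hp.1.trans (ih hp.2)

lemma Reachable.map_of_forall_adj (hf : ∀ a b, G.Adj a b → H.Reachable (f a) (f b))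
    (h : G.Reachable u v) : H.Reachable (f u) (f v) :=
  h.elim fun p => p.reachable_map_of_forall_dart fun d _ => hf _ _ d.adj

end SimpleGraph

namespace NCST

open SimpleGraph Fin.NatCast

variable {n : ℕ}

lemma adj_graphOf_iff {E : Finset Edge} (hE : ValidEdges n E) {x y : Fin n} :
    (graphOf n E).Adj x y ↔ ((x : ℕ), (y : ℕ)) ∈ E ∨ ((y : ℕ), (x : ℕ)) ∈ E := by
  rw [graphOf, fromRel_adj, and_iff_right_iff_imp]
  rintro (h | h) rfl <;> exact (hE _ h).1.false

lemma graphOf_adj_of_mem [NeZero n] {E : Finset Edge} (hE : ValidEdges n E) {e : Edge}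
    (he : e ∈ E) : (graphOf n E).Adj (e.1 : Fin n) (e.2 : Fin n) := by
  obtain ⟨h12, h2⟩ := hE e he
  rw [adj_graphOf_iff hE, Fin.val_cast_of_lt (h12.trans h2), Fin.val_cast_of_lt h2]
  exact Or.inl he

lemma card_edgeSet_graphOf [NeZero n] {E : Finset Edge} (hE : ValidEdges n E) :
    Nat.card (graphOf n E).edgeSet = E.card := by
  have hval : ∀ e ∈ E, ((e.1 : Fin n) : ℕ) = e.1 ∧ ((e.2 : Fin n) : ℕ) = e.2 :=
    fun e he =>
      ⟨Fin.val_cast_of_lt ((hE e he).1.trans (hE e he).2), Fin.val_cast_of_lt (hE e he).2⟩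
  have himage : (graphOf n E).edgeSet =
      (fun e : Edge => s((e.1 : Fin n), (e.2 : Fin n))) '' E := by
    ext z
    induction z using Sym2.ind with
    | _ x y =>
      simp only [mem_edgeSet, adj_graphOf_iff hE, Set.mem_image, Finset.mem_coe]
      constructor
      · rintro (h | h)
        · exact ⟨_, h, by simp⟩
        · exact ⟨_, h, by simp⟩
      · rintro ⟨e, he, hz⟩
        obtain ⟨h1, h2⟩ | ⟨h1, h2⟩ := Sym2.eq_iff.1 hz <;> subst h1 h2
        · exact Or.inl (by rwa [(hval e he).1, (hval e he).2])
        · exact Or.inr (by rwa [(hval e he).1, (hval e he).2])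
  rw [himage, Nat.card_coe_set_eq, Set.InjOn.ncard_image, Set.ncard_coe_finset]
  intro e he e' he' hee
  have hlt := (hE e he).1
  have hlt' := (hE e' he').1
  obtain ⟨h1, h2⟩ | ⟨h1, h2⟩ := Sym2.eq_iff.1 hee <;>
    replace h1 := congrArg Fin.val h1 <;> replace h2 := congrArg Fin.val h2 <;>
    simp only [(hval e he).1, (hval e he).2, (hval e' he').1, (hval e' he').2] at h1 h2
  · exact Prod.ext h1 h2
  · omega

lemma isTree_graphOf_iff [NeZero n] {E : Finset Edge} (hE : ValidEdges n E) :
    (graphOf n E).IsTree ↔ (graphOf n E).Connected ∧ E.card + 1 = n := by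
  rw [isTree_iff_connected_and_card, card_edgeSet_graphOf hE, Nat.card_fin]

lemma IsNCSpanningTree.card_add_one [NeZero n] {T : Finset Edge}
    (hT : IsNCSpanningTree n T) : T.card + 1 = n :=
  ((isTree_graphOf_iff hT.1).1 hT.2.2).2

lemma IsNCSpanningTree.zero_edge_not_mem {S : Finset Edge} (hS : IsNCSpanningTree (n + 1) S)
    {a c : ℕ} (han : (a, n) ∈ S) (hcn : (c, n) ∈ S) (hca : c < a) : ((0 : ℕ), a) ∉ S := by
  intro h0a
  obtain ⟨hV, hNC, hT⟩ := hS
  rcases Nat.eq_zero_or_pos c with rfl | hc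
  · refine hT.isAcyclic.cliqueFree le_rfl {((0 : ℕ) : Fin (n + 1)), (a : Fin (n + 1)),
      (n : Fin (n + 1))} (is3Clique_triple_iff.2 ⟨?_, ?_, ?_⟩)
    exacts [graphOf_adj_of_mem hV h0a, graphOf_adj_of_mem hV hcn, graphOf_adj_of_mem hV han]
  · exact hNC _ h0a _ hcn (Or.inl ⟨hc, hca, (hV _ han).1⟩)

/-- Smallest neighbour of `n`; junk value `0` if it has none. -/
noncomputable def minNbr (n : ℕ) (S : Finset Edge) : ℕ := sInf {a | (a, n) ∈ S}

lemma minNbr_mem {S : Finset Edge} {a : ℕ} (h : (a, n) ∈ S) : (minNbr n S, n) ∈ S :=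
  Nat.sInf_mem (s := {a | (a, n) ∈ S}) ⟨a, h⟩

lemma minNbr_le {S : Finset Edge} {a : ℕ} (h : (a, n) ∈ S) : minNbr n S ≤ a :=
  Nat.sInf_le h

/-- Identifies the point `n` with `0`. The edge from `n` to its smallest neighbour is dropped:
by non-crossing, that neighbour is already connected to `0` without passing through `n`. -/
noncomputable def contractLast (n : ℕ) (S : Finset Edge) : Finset Edge :=
  S.filter (·.2 ≠ n) ∪ ((S.filter (·.2 = n)).erase (minNbr n S, n)).image fun e => (0, e.1)

lemma mem_contractLast {S : Finset Edge} {x : Edge} :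
    x ∈ contractLast n S ↔
      (x ∈ S ∧ x.2 ≠ n) ∨ ∃ a, (a, n) ∈ S ∧ a ≠ minNbr n S ∧ x = (0, a) := by
  simp only [contractLast, Finset.mem_union, Finset.mem_filter, Finset.mem_image,
    Finset.mem_erase]
  refine or_congr_right ⟨?_, ?_⟩
  · rintro ⟨⟨a, b⟩, ⟨hne, hS, rfl⟩, rfl⟩
    exact ⟨a, hS, fun h => hne (by rw [h]), rfl⟩
  · rintro ⟨a, hS, hne, rfl⟩
    exact ⟨(a, n), ⟨fun h => hne (Prod.ext_iff.1 h).1, hS, rfl⟩, rfl⟩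

lemma ValidEdges.contractLast {S : Finset Edge} (hV : ValidEdges (n + 1) S) :
    ValidEdges n (contractLast n S) := by
  intro x hx
  rcases mem_contractLast.1 hx with ⟨hxS, hxn⟩ | ⟨a, haS, ham, rfl⟩
  · have := hV x hxS
    exact ⟨this.1, by omega⟩
  · have := minNbr_le haS
    exact ⟨by omega, (hV _ haS).1⟩

lemma NonCrossing.contractLast {S : Finset Edge} (hV : ValidEdges (n + 1) S)
    (hNC : NonCrossing S) : NonCrossing (contractLast n S) := by
  intro x hx y hy hcross
  rcases mem_contractLast.1 hx with ⟨hxS, hxn⟩ | ⟨a, haS, -, rfl⟩ <;>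
    rcases mem_contractLast.1 hy with ⟨hyS, hyn⟩ | ⟨b, hbS, -, rfl⟩
  · exact hNC _ hxS _ hyS hcross
  · -- an edge `x` crossing `(0, b)` crosses `(b, n)`
    have := (hV _ hxS).2
    exact hNC _ hxS _ hbS (Or.inl (by rcases hcross with h | h <;> omega))
  · have := (hV _ hyS).2
    exact hNC _ hyS _ haS (Or.inl (by rcases hcross with h | h <;> omega))
  · rcases hcross with h | h <;> omega

lemma IsNCSpanningTree.card_contractLast {S : Finset Edge}
    (hS : IsNCSpanningTree (n + 1) S) {c : ℕ} (hc : (c, n) ∈ S) :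
    (contractLast n S).card + 1 = n := by
  set L := S.filter (·.2 = n)
  have hm : (minNbr n S, n) ∈ L := Finset.mem_filter.2 ⟨minNbr_mem hc, rfl⟩
  have hdisj : Disjoint (S.filter (·.2 ≠ n))
      ((L.erase (minNbr n S, n)).image fun e => ((0 : ℕ), e.1)) := by
    refine Finset.disjoint_left.2 fun x hx hx' => ?_
    obtain ⟨⟨a, b⟩, he, rfl⟩ := Finset.mem_image.1 hx'
    obtain ⟨hne, haS⟩ : a ≠ minNbr n S ∧ (a, n) ∈ S := by
      simp only [L, Finset.mem_erase, Finset.mem_filter, ne_eq, Prod.mk.injEq] at he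
      obtain ⟨hne, haS, rfl⟩ := he
      exact ⟨fun h => hne ⟨h, rfl⟩, haS⟩
    have hlt : minNbr n S < a := (minNbr_le haS).lt_of_ne fun h => hne (by rw [h])
    exact hS.zero_edge_not_mem haS (minNbr_mem hc) hlt (Finset.mem_filter.1 hx).1
  have hinj : Set.InjOn (fun e : Edge => ((0 : ℕ), e.1)) ↑(L.erase (minNbr n S, n)) :=
    fun e he e' he' h => Prod.ext (Prod.ext_iff.1 h).2
      (((Finset.mem_filter.1 (Finset.mem_of_mem_erase he)).2).trans
        (Finset.mem_filter.1 (Finset.mem_of_mem_erase he')).2.symm)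
  have hsplit : L.card + (S.filter (·.2 ≠ n)).card + 1 = n + 1 := by
    rw [Finset.card_filter_add_card_filter_not, hS.card_add_one]
  have hL : 0 < L.card := Finset.card_pos.2 ⟨_, hm⟩
  rw [contractLast, Finset.card_union_of_disjoint hdisj, Finset.card_image_of_injOn hinj,
    Finset.card_erase_of_mem hm]
  omega

lemma IsNCSpanningTree.exists_walk_nbr_last_zero [NeZero n] {S : Finset Edge}
    (hS : IsNCSpanningTree (n + 1) S) :
    ∃ c : Fin (n + 1), ((c : ℕ), n) ∈ S ∧
      ∃ p : (graphOf (n + 1) S).Walk c 0, Fin.last n ∉ p.support := by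
  have hne : Fin.last n ≠ 0 := by simp [Fin.ext_iff, NeZero.ne n]
  obtain ⟨p, hp⟩ := hS.2.2.connected.exists_isPath (Fin.last n) 0
  obtain ⟨c, hadj, p, rfl⟩ := Walk.exists_eq_cons_of_ne hne p
  refine ⟨c, ?_, p, ((Walk.cons_isPath_iff _ _).1 hp).2⟩
  rcases (adj_graphOf_iff hS.1).1 hadj with h | h
  · exact absurd (hS.1 _ h).1 (by simp [Nat.lt_succ_iff.1 c.isLt])
  · simpa using h

lemma reachable_contractLast_of_walk [NeZero n] {S : Finset Edge} (hV : ValidEdges (n + 1) S)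
    {u v : Fin (n + 1)} (p : (graphOf (n + 1) S).Walk u v) (hp : Fin.last n ∉ p.support) :
    (graphOf n (contractLast n S)).Reachable ((u : ℕ) : Fin n) ((v : ℕ) : Fin n) := by
  refine p.reachable_map_of_forall_dart (f := fun v : Fin (n + 1) => ((v : ℕ) : Fin n))
    fun d hd => ?_
  have h1 : (d.fst : ℕ) ≠ n :=
    (Fin.val_lt_last (ne_of_mem_of_not_mem (p.dart_fst_mem_support_of_mem_darts hd) hp)).ne
  have h2 : (d.snd : ℕ) ≠ n :=
    (Fin.val_lt_last (ne_of_mem_of_not_mem (p.dart_snd_mem_support_of_mem_darts hd) hp)).ne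
  rcases (adj_graphOf_iff hV).1 d.adj with h | h
  · exact (graphOf_adj_of_mem hV.contractLast (mem_contractLast.2 (Or.inl ⟨h, h2⟩))).reachable
  · exact (graphOf_adj_of_mem hV.contractLast
      (mem_contractLast.2 (Or.inl ⟨h, h1⟩))).reachable.symm

lemma IsNCSpanningTree.reachable_minNbr_contractLast [NeZero n] {S : Finset Edge}
    (hS : IsNCSpanningTree (n + 1) S) :
    (graphOf n (contractLast n S)).Reachable (minNbr n S : Fin n) 0 := by
  obtain ⟨c, hc, p, hp⟩ := hS.exists_walk_nbr_last_zero
  set m := minNbr n S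
  have hmS : (m, n) ∈ S := minNbr_mem hc
  have hmn : m < n := (hS.1 _ hmS).1
  by_cases hmp : (m : Fin (n + 1)) ∈ p.support
  · have := reachable_contractLast_of_walk hS.1 (p.dropUntil _ hmp)
      fun h => hp (p.support_dropUntil_subset_support hmp h)
    simpa [Fin.val_cast_of_lt (hmn.trans n.lt_succ_self)] using this
  · -- `p` runs from `c > m` down to `0` avoiding `m`, so some edge of it jumps over `m`;
    -- that edge crosses `(m, n)`.
    exfalso
    have hval : ∀ v ∈ p.support, (v : ℕ) ≠ m := fun v hv h =>
      hmp (by rwa [← h, Fin.cast_val_eq_self])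
    have hcm : m < c :=
      (minNbr_le hc).lt_of_ne (hval c p.start_mem_support).symm
    obtain ⟨d, hd, hfst, hsnd⟩ :=
      p.exists_boundary_dart {v | m < (v : ℕ)} hcm (by simp)
    have hfst : m < (d.fst : ℕ) := hfst
    have hsnd : (d.snd : ℕ) < m := (not_lt.1 hsnd).lt_of_ne
      (hval _ (p.dart_snd_mem_support_of_mem_darts hd))
    have hfst' : (d.fst : ℕ) < n :=
      Fin.val_lt_last (ne_of_mem_of_not_mem (p.dart_fst_mem_support_of_mem_darts hd) hp)
    rcases (adj_graphOf_iff hS.1).1 d.adj with h | h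
    · exact absurd (hS.1 _ h).1 (by omega)
    · exact hS.2.1 _ h _ hmS (Or.inl ⟨hsnd, hfst, hfst'⟩)

lemma IsNCSpanningTree.reachable_contractLast_of_mem [NeZero n] {S : Finset Edge}
    (hS : IsNCSpanningTree (n + 1) S) {e : Edge} (he : e ∈ S) :
    (graphOf n (contractLast n S)).Reachable (e.1 : Fin n) (e.2 : Fin n) := by
  by_cases he2 : e.2 = n
  · have he' : (e.1, n) ∈ S := by rwa [← he2]
    rw [he2, Fin.natCast_self]
    by_cases ha : e.1 = minNbr n S
    · rw [ha]
      exact hS.reachable_minNbr_contractLast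
    · simpa using (graphOf_adj_of_mem hS.1.contractLast
        (mem_contractLast.2 (Or.inr ⟨e.1, he', ha, rfl⟩))).reachable.symm
  · exact (graphOf_adj_of_mem hS.1.contractLast
      (mem_contractLast.2 (Or.inl ⟨he, he2⟩))).reachable

lemma IsNCSpanningTree.connected_contractLast [NeZero n] {S : Finset Edge}
    (hS : IsNCSpanningTree (n + 1) S) : (graphOf n (contractLast n S)).Connected := by
  refine ⟨fun x y => ?_⟩
  have := (hS.2.2.connected.preconnected x.castSucc y.castSucc).map_of_forall_adj
    (H := graphOf n (contractLast n S)) (f := fun v : Fin (n + 1) => ((v : ℕ) : Fin n))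
    fun a b hab => ?_
  · simpa using this
  rcases (adj_graphOf_iff hS.1).1 hab with h | h
  · exact hS.reachable_contractLast_of_mem h
  · exact (hS.reachable_contractLast_of_mem h).symm

lemma IsNCSpanningTree.contractLast [NeZero n] {S : Finset Edge}
    (hS : IsNCSpanningTree (n + 1) S) : IsNCSpanningTree n (contractLast n S) := by
  obtain ⟨c, hc, -⟩ := hS.exists_walk_nbr_last_zero
  exact ⟨hS.1.contractLast, hS.2.1.contractLast hS.1, (isTree_graphOf_iff hS.1.contractLast).2
    ⟨hS.connected_contractLast, hS.card_contractLast hc⟩⟩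

lemma NonCrossing.insert_zero_last {T : Finset Edge} (hV : ValidEdges n T)
    (hNC : NonCrossing T) : NonCrossing (insert (0, n) T) := by
  intro e he f hf
  rcases Finset.mem_insert.1 he with rfl | he <;> rcases Finset.mem_insert.1 hf with rfl | hf
  · simp [crosses]
  · have := hV f hf
    simp only [crosses]
    omega
  · have := hV e he
    simp only [crosses]
    omega
  · exact hNC e he f hf

lemma IsNCSpanningTree.insert_zero_last [NeZero n] {T : Finset Edge}
    (hT : IsNCSpanningTree n T) : IsNCSpanningTree (n + 1) (insert (0, n) T) := by
  have hcard := hT.card_add_one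
  obtain ⟨hV, hNC, hTree⟩ := hT
  have hV' : ValidEdges (n + 1) (insert (0, n) T) := by
    intro e he
    rcases Finset.mem_insert.1 he with rfl | he
    · exact ⟨NeZero.pos n, n.lt_succ_self⟩
    · have := hV e he
      exact ⟨this.1, by omega⟩
  have hnot : ((0 : ℕ), n) ∉ T := fun h => (hV _ h).2.false
  have hreach : ∀ i : Fin n, (graphOf (n + 1) (insert (0, n) T)).Reachable 0 i.castSucc :=
    fun i => by
      simpa using (hTree.connected.preconnected 0 i).map_of_forall_adj (f := Fin.castSucc)
        fun a b hab => by
          refine Adj.reachable ((adj_graphOf_iff hV').2 ?_)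
          rw [Fin.val_castSucc, Fin.val_castSucc]
          exact ((adj_graphOf_iff hV).1 hab).imp (Finset.mem_insert_of_mem ·)
            (Finset.mem_insert_of_mem ·)
  have hlast : (graphOf (n + 1) (insert (0, n) T)).Adj 0 (Fin.last n) := by
    simpa using graphOf_adj_of_mem hV' (Finset.mem_insert_self _ _)
  refine ⟨hV', hNC.insert_zero_last hV, (isTree_graphOf_iff hV').2 ⟨?_, ?_⟩⟩
  · refine (connected_iff_exists_forall_reachable _).2 ⟨Fin.last n, fun v => ?_⟩
    induction v using Fin.lastCases with
    | last => rfl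
    | cast i => exact hlast.symm.reachable.trans (hreach i)
  · rw [Finset.card_insert_of_notMem hnot, hcard]

lemma contractLast_insert_zero_last {T : Finset Edge} (hV : ValidEdges n T) :
    contractLast n (insert (0, n) T) = T := by
  have hm : minNbr n (insert (0, n) T) = 0 :=
    Nat.eq_zero_of_le_zero (minNbr_le (Finset.mem_insert_self _ _))
  ext x
  rw [mem_contractLast, hm]
  simp only [Finset.mem_insert]
  constructor
  · rintro (⟨rfl | hx, hxn⟩ | ⟨a, h | ha, ha0, rfl⟩)
    · exact absurd rfl hxn
    · exact hx
    · exact absurd (Prod.ext_iff.1 h).1 ha0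
    · exact absurd (hV _ ha).2 (lt_irrefl n)
  · exact fun hx => Or.inl ⟨Or.inr hx, (hV _ hx).2.ne⟩

lemma card_contractLast_sdiff_le_one {S S' : Finset Edge} (h : (S \ S').card = 1) :
    (contractLast n S \ contractLast n S').card ≤ 1 := by
  obtain ⟨e, he⟩ := Finset.card_eq_one.1 h
  have hmem : ∀ y ∈ S, y ∉ S' → y = e := fun y hy hy' =>
    Finset.mem_singleton.1 (he ▸ Finset.mem_sdiff.2 ⟨hy, hy'⟩)
  refine Finset.card_le_one_iff_subset_singleton.2 ⟨if e.2 ≠ n then e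
    else if e.1 = minNbr n S then (0, minNbr n S') else (0, e.1), fun x hx => ?_⟩
  rw [Finset.mem_singleton]
  obtain ⟨hxS, hxS'⟩ := Finset.mem_sdiff.1 hx
  rcases mem_contractLast.1 hxS with ⟨hx, hxn⟩ | ⟨c, hcS, hcm, rfl⟩
  · obtain rfl := hmem x hx fun h => hxS' (mem_contractLast.2 (Or.inl ⟨h, hxn⟩))
    simp [hxn]
  · by_cases hcS' : (c, n) ∈ S'
    · -- `c` is the smallest neighbour of `n` in `S'` only, so the flip removed the edge from `n`
      -- to its smallest neighbour in `S`
      have hc' : c = minNbr n S' := by_contra fun h =>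
        hxS' (mem_contractLast.2 (Or.inr ⟨c, hcS', h, rfl⟩))
      have hmS' : (minNbr n S, n) ∉ S' := fun h =>
        hcm (le_antisymm (hc' ▸ minNbr_le h) (minNbr_le hcS))
      obtain rfl := hmem _ (minNbr_mem hcS) hmS'
      simp [hc']
    · obtain rfl := hmem _ hcS hcS'
      simp [hcm]

section

variable [NeZero n]

noncomputable def ConvexTree.contractLast (S : ConvexTree (n + 1)) : ConvexTree n :=
  ⟨NCST.contractLast n S.1, S.2.contractLast⟩

def ConvexTree.insertZeroLast (T : ConvexTree n) : ConvexTree (n + 1) :=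
  ⟨insert (0, n) T.1, T.2.insert_zero_last⟩

lemma ConvexTree.contractLast_insertZeroLast (T : ConvexTree n) :
    T.insertZeroLast.contractLast = T :=
  Subtype.ext (contractLast_insert_zero_last T.2.1)

lemma ConvexTree.flipGraph_adj_contractLast_or_eq {S S' : ConvexTree (n + 1)}
    (h : (flipGraph (n + 1)).Adj S S') :
    (flipGraph n).Adj S.contractLast S'.contractLast ∨ S.contractLast = S'.contractLast := by
  rw [flipGraph, fromRel_adj] at h ⊢
  obtain ⟨hSS', -⟩ : (S.1 \ S'.1).card = 1 ∧ (S'.1 \ S.1).card = 1 := h.2.elim id And.symm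
  have hcard : (S.contractLast.1 \ S'.contractLast.1).card =
      (S'.contractLast.1 \ S.contractLast.1).card := Finset.card_sdiff_comm <| by
    have := S.contractLast.2.card_add_one
    have := S'.contractLast.2.card_add_one
    omega
  rcases Nat.le_one_iff_eq_zero_or_eq_one.1 (card_contractLast_sdiff_le_one hSS') with h0 | h1
  · refine Or.inr (Subtype.ext (Finset.Subset.antisymm ?_ ?_)) <;>
      rw [← Finset.sdiff_eq_empty_iff_subset, ← Finset.card_eq_zero]
    exacts [h0, hcard ▸ h0]
  · refine Or.inl ⟨fun heq => ?_, Or.inl ⟨h1, hcard ▸ h1⟩⟩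
    rw [show NCST.contractLast n S.1 = NCST.contractLast n S'.1 from congrArg Subtype.val heq,
      Finset.sdiff_self, Finset.card_empty] at h1
    exact zero_ne_one h1

end

/-- the diameter of the flip graph of non-crossing spanning trees
on `n` points in convex position is monotone in `n`. -/
theorem stmt6 (n : ℕ) (hn : 1 ≤ n) : flipDiam n ≤ flipDiam (n + 1) := by
  have : NeZero n := ⟨by omega⟩
  refine iSup₂_le fun T T' => ?_
  calc (flipGraph n).edist T T'
      = (flipGraph n).edist T.insertZeroLast.contractLast T'.insertZeroLast.contractLast := by
        rw [ConvexTree.contractLast_insertZeroLast, ConvexTree.contractLast_insertZeroLast]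
    _ ≤ (flipGraph (n + 1)).edist T.insertZeroLast T'.insertZeroLast :=
        edist_map_le (fun _ _ => ConvexTree.flipGraph_adj_contractLast_or_eq) _ _
    _ ≤ flipDiam (n + 1) :=
        le_iSup₂ (f := fun S S' => (flipGraph (n + 1)).edist S S') _ _

end NCST
end

section
/- Let T, T' be two non-crossing spanning trees on linearly ordered points p_1,...,p_n, and let A be the set of near-near gaps g_i whose paired edges e_i ∈ T and e'_i ∈ T' are adjacent (share an endpoint) with e_i longer than e'_i. Then the induced subgraph H[A] of the conflict graph H(T,T') is acyclic. -/
/- The length of `e_i = ρ i` is a potential that strictly increases along every edge of `H[A]`,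
so `H[A]` has no directed cycle. For a gap `i ∈ A` the edges `e_i` and `e'_i` share the endpoint
of the gap on the same side, with `e'_i` nested inside `e_i`; with this shape, the increase along
a conflict edge `i → j` is a case check using only that `T` is non-crossing and that `e_j` is a
shortest edge of `T` covering `g_j`. -/

/- Non-crossing spanning trees on linearly ordered points p_0, ..., p_{n-1}.
An edge is a pair (a, b) of indices with a < b < n.
Gap k (for k + 1 < n) lies between points k and k+1. -/

namespace NCST

attribute [local instance] Classical.propDecidable

theorem AcyclicOn.of_lt_potential {β : Type*} [Preorder β] {R : ℕ → ℕ → Prop} {S : Set ℕ}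
    (f : ℕ → β) (hf : ∀ x ∈ S, ∀ y ∈ S, R x y → f x < f y) : AcyclicOn R S := by
  intro a hcycle
  have hlt : Relation.TransGen (· < ·) (f a) (f a) :=
    Relation.TransGen.lift f (fun x y ⟨hx, hy, hxy⟩ => hf x hx y hy hxy) a a hcycle
  rw [Relation.transGen_eq_self] at hlt
  exact lt_irrefl _ hlt

/-- Membership in the set `A` of the theorem. -/
def LongAdjNearNear (n : ℕ) (ρ ρ' : ℕ → Edge) (i : ℕ) : Prop :=
  NearNear n ρ ρ' i ∧ adjEdges (ρ i) (ρ' i) ∧ elen (ρ' i) < elen (ρ i)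

theorem anchored_of_isNear_of_adjEdges {e e' : Edge} {k : ℕ} (he : isNear e k)
    (he' : isNear e' k) (hadj : adjEdges e e') (hlt : elen e' < elen e) :
    (e.1 = k ∧ e'.1 = k ∧ k + 1 < e'.2 ∧ e'.2 < e.2) ∨
      (e.2 = k + 1 ∧ e'.2 = k + 1 ∧ e.1 < e'.1 ∧ e'.1 < k) := by
  simp only [isNear, coversGap, adjEdges, elen] at he he' hadj hlt
  omega

theorem elen_lt_of_conflictEdge {n : ℕ} {T : Finset Edge} {ρ ρ' : ℕ → Edge}
    (hT : NonCrossing T) (hρ : IsRho n T ρ) {i j : ℕ}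
    (hi : LongAdjNearNear n ρ ρ' i) (hj : LongAdjNearNear n ρ ρ' j)
    (hij : conflictEdge ρ ρ' i j) : elen (ρ i) < elen (ρ j) := by
  obtain ⟨⟨hin, -, hnear_i, hnear'_i⟩, hadj_i, hlt_i⟩ := hi
  obtain ⟨⟨hjn, -, hnear_j, hnear'_j⟩, hadj_j, hlt_j⟩ := hj
  have shape_i := anchored_of_isNear_of_adjEdges hnear_i hnear'_i hadj_i hlt_i
  have shape_j := anchored_of_isNear_of_adjEdges hnear_j hnear'_j hadj_j hlt_j
  have hcross : ¬ crosses (ρ i) (ρ j) := hT _ (hρ i hin).1 _ (hρ j hjn).1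
  have hshortest : coversGap (ρ i) j → elen (ρ j) ≤ elen (ρ i) :=
    (hρ j hjn).2.2 _ (hρ i hin).1
  obtain ⟨hne, htype⟩ := hij
  simp only [crosses, covers, coversGap, elen] at hcross htype hshortest ⊢
  omega

theorem stmt7_general (n : ℕ) (T : Finset Edge) (ρ ρ' : ℕ → Edge)
    (hT : IsNCSpanningTree n T)
    (hρ : IsRho n T ρ) :
    AcyclicOn (conflictEdge ρ ρ')
      {i | NearNear n ρ ρ' i ∧ adjEdges (ρ i) (ρ' i) ∧ elen (ρ' i) < elen (ρ i)} :=
  AcyclicOn.of_lt_potential (fun i => elen (ρ i))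
    fun _ hi _ hj hij => elen_lt_of_conflictEdge hT.2.1 hρ hi hj hij

/-- the subgraph of the conflict graph `H(T,T')` induced on the set
`A` of near-near gaps whose paired edges are adjacent with `e_i` longer than
`e'_i` is acyclic. -/
theorem stmt7 (n : ℕ) (T T' : Finset Edge) (ρ ρ' : ℕ → Edge)
    (hT : IsNCSpanningTree n T) (hT' : IsNCSpanningTree n T')
    (hρ : IsRho n T ρ) (hbij : RhoBij n T ρ)
    (hρ' : IsRho n T' ρ') (hbij' : RhoBij n T' ρ') :
    AcyclicOn (conflictEdge ρ ρ')
      {i | NearNear n ρ ρ' i ∧ adjEdges (ρ i) (ρ' i) ∧ elen (ρ' i) < elen (ρ i)} :=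
  stmt7_general n T ρ ρ' hT hρ

end NCST
end

section
/- Let T, T' be two non-crossing spanning trees on linearly ordered points p_1,...,p_n with conflict graph H = H(T,T'). Then the vertex set of H can be partitioned into three sets A, B, C such that each induces an acyclic subgraph of H. In particular, H has an acyclic induced subgraph on at least |V(H)|/3 vertices, i.e., ac(H) ≥ |V(H)|/3. -/
/- Non-crossing spanning trees on linearly ordered points p_0, ..., p_{n-1}.
An edge is a pair (a, b) of indices with a < b < n.
Gap k (for k + 1 < n) lies between points k and k+1. -/

namespace NCST

attribute [local instance] Classical.propDecidable

/-!
Split the near-near gaps `g_i` by the pair `(e_i, e'_i)`: class A when the two edges share an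
endpoint and `e_i` is the longer one; otherwise class B when `e'_i` ends at `p_{i+1}` and class C
when it starts at `p_i`. Each class carries a potential on gaps that strictly increases along every
conflict edge `g_i → g_j` whose head `g_j` lies in the class: `|e_i|` for A; the left endpoint of
`e_i`, ties broken by the reversed right endpoint, for B; the mirror image for C. This is a finite
case analysis on the endpoints of `e_i`, `e_j`, `e'_j`, which rests on `e_i` and `e_j` not crossing
and on every edge of `T` that covers `g_j` also covering `e_j`. A strictly increasing potential
rules out directed cycles, and the largest class holds a third of `V(H)`.
-/

theorem IsRho.covers_of_coversGap {n : ℕ} {E : Finset Edge} {ρ : ℕ → Edge}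
    (hρ : IsRho n E ρ) (hnc : NonCrossing E) {k : ℕ} (hk : k + 1 < n) {f : Edge} (hf : f ∈ E)
    (hfk : coversGap f k) : covers f (ρ k) := by
  obtain ⟨hmem, hcov, hmin⟩ := hρ k hk
  have hcross := hnc f hf (ρ k) hmem
  have hlen := hmin f hf hfk
  simp only [crosses, coversGap, covers, elen, not_or, not_and, not_lt] at *
  omega

theorem acyclicOn_of_lt {α : Type*} [Preorder α] {R : ℕ → ℕ → Prop} {S : Set ℕ} (μ : ℕ → α)
    (hμ : ∀ x ∈ S, ∀ y ∈ S, R x y → μ x < μ y) : AcyclicOn R S := fun a ha => by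
  have h := Relation.TransGen.lift μ (fun x y h => hμ x h.1 y h.2.1 h.2.2) a a ha
  rw [Function.onFun, Relation.transGen_eq_self] at h
  exact lt_irrefl _ h

theorem AcyclicOn.mono {R : ℕ → ℕ → Prop} {S S' : Set ℕ} (h : AcyclicOn R S) (hS : S' ⊆ S) :
    AcyclicOn R S' := fun a ha =>
  h a <| Relation.TransGen.mono (fun _ _ hxy => ⟨hS hxy.1, hS hxy.2.1, hxy.2.2⟩) a a ha

theorem exists_acyclicOn_card_le_three_mul {R : ℕ → ℕ → Prop} {V A B C : Finset ℕ}
    (hV : A ∪ B ∪ C = V) (hA : AcyclicOn R A) (hB : AcyclicOn R B) (hC : AcyclicOn R C) :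
    ∃ Y ⊆ V, AcyclicOn R Y ∧ V.card ≤ 3 * Y.card := by
  have hcard : V.card ≤ A.card + B.card + C.card := by
    calc V.card = (A ∪ B ∪ C).card := by rw [hV]
      _ ≤ (A ∪ B).card + C.card := Finset.card_union_le _ _
      _ ≤ A.card + B.card + C.card := by gcongr; exact Finset.card_union_le _ _
  subst hV
  by_cases hAmax : B.card ≤ A.card ∧ C.card ≤ A.card
  · exact ⟨A, Finset.subset_union_left.trans Finset.subset_union_left, hA, by omega⟩
  by_cases hBC : C.card ≤ B.card
  · exact ⟨B, Finset.subset_union_right.trans Finset.subset_union_left, hB, by omega⟩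
  · exact ⟨C, Finset.subset_union_right, hC, by omega⟩

/-- For near edges `e`, `e'` of gap `i`, the condition `e.1 = i ↔ e'.1 = i` says that they share
an endpoint. -/
def IsClassA (i : ℕ) (e e' : Edge) : Prop := (e.1 = i ↔ e'.1 = i) ∧ elen e' < elen e

def IsClassB (i : ℕ) (e e' : Edge) : Prop := ¬ IsClassA i e e' ∧ e'.2 = i + 1

def IsClassC (i : ℕ) (e e' : Edge) : Prop := ¬ IsClassA i e e' ∧ e'.2 ≠ i + 1

section LocalGeometry

variable {ρ ρ' : ℕ → Edge} {i j : ℕ}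

theorem elen_lt_of_conflictEdge_of_isClassA (hi : isNear (ρ i) i) (hj : isNear (ρ j) j)
    (hj' : isNear (ρ' j) j) (hAj : IsClassA j (ρ j) (ρ' j)) (hnc : ¬ crosses (ρ i) (ρ j))
    (h : conflictEdge ρ ρ' i j) :
    elen (ρ i) < elen (ρ j) := by
  simp only [IsClassA, isNear, coversGap, covers, crosses, conflictEdge, elen] at *
  omega

theorem lt_of_conflictEdge_of_isClassB (hj : isNear (ρ j) j) (hne : ρ i ≠ ρ j)
    (hBj : IsClassB j (ρ j) (ρ' j)) (hcov : coversGap (ρ i) j → covers (ρ i) (ρ j))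
    (h : conflictEdge ρ ρ' i j) :
    (ρ i).1 < (ρ j).1 ∨ (ρ i).1 = (ρ j).1 ∧ (ρ j).2 < (ρ i).2 := by
  simp only [IsClassB, IsClassA, isNear, coversGap, covers, crosses, conflictEdge, elen, ne_eq,
    Prod.ext_iff] at *
  omega

theorem lt_of_conflictEdge_of_isClassC (hj : isNear (ρ j) j) (hj' : isNear (ρ' j) j)
    (hne : ρ i ≠ ρ j) (hCj : IsClassC j (ρ j) (ρ' j))
    (hcov : coversGap (ρ i) j → covers (ρ i) (ρ j)) (h : conflictEdge ρ ρ' i j) :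
    (ρ j).2 < (ρ i).2 ∨ (ρ i).2 = (ρ j).2 ∧ (ρ i).1 < (ρ j).1 := by
  simp only [IsClassC, IsClassA, isNear, coversGap, covers, crosses, conflictEdge, elen, ne_eq,
    Prod.ext_iff] at *
  omega

end LocalGeometry

section Acyclic

variable {n : ℕ} {T : Finset Edge} {ρ ρ' : ℕ → Edge}

theorem acyclicOn_isClassA (hnc : NonCrossing T) (hρ : IsRho n T ρ) :
    AcyclicOn (conflictEdge ρ ρ') {i | NearNear n ρ ρ' i ∧ IsClassA i (ρ i) (ρ' i)} := by
  refine acyclicOn_of_lt (fun i => elen (ρ i)) ?_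
  rintro i ⟨⟨hi, -, hnear, -⟩, -⟩ j ⟨⟨hj, -, hnear_j, hnear'_j⟩, hAj⟩ h
  exact elen_lt_of_conflictEdge_of_isClassA hnear hnear_j hnear'_j hAj
    (hnc _ (hρ i hi).1 _ (hρ j hj).1) h

theorem acyclicOn_isClassB (hnc : NonCrossing T) (hρ : IsRho n T ρ) (hbij : RhoBij n T ρ) :
    AcyclicOn (conflictEdge ρ ρ') {i | NearNear n ρ ρ' i ∧ IsClassB i (ρ i) (ρ' i)} := by
  refine acyclicOn_of_lt (fun i => toLex ((ρ i).1, OrderDual.toDual (ρ i).2)) ?_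
  rintro i ⟨⟨hi, -⟩, -⟩ j ⟨⟨hj, -, hnear_j, -⟩, hBj⟩ h
  have hlt := lt_of_conflictEdge_of_isClassB hnear_j (fun he => h.1 (hbij.1 i j hi hj he)) hBj
    (hρ.covers_of_coversGap hnc hj (hρ i hi).1) h
  simpa only [Prod.Lex.toLex_lt_toLex, OrderDual.toDual_lt_toDual, OrderDual.toDual_inj] using hlt

theorem acyclicOn_isClassC (hnc : NonCrossing T) (hρ : IsRho n T ρ) (hbij : RhoBij n T ρ) :
    AcyclicOn (conflictEdge ρ ρ') {i | NearNear n ρ ρ' i ∧ IsClassC i (ρ i) (ρ' i)} := by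
  refine acyclicOn_of_lt (fun i => toLex (OrderDual.toDual (ρ i).2, (ρ i).1)) ?_
  rintro i ⟨⟨hi, -⟩, -⟩ j ⟨⟨hj, -, hnear_j, hnear'_j⟩, hCj⟩ h
  have hlt := lt_of_conflictEdge_of_isClassC hnear_j hnear'_j
    (fun he => h.1 (hbij.1 i j hi hj he)) hCj (hρ.covers_of_coversGap hnc hj (hρ i hi).1) h
  simpa only [Prod.Lex.toLex_lt_toLex, OrderDual.toDual_lt_toDual, OrderDual.toDual_inj] using hlt

end Acyclic

theorem stmt9_general (n : ℕ) (T : Finset Edge) (ρ ρ' : ℕ → Edge)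
    (hT : IsNCSpanningTree n T)
    (hρ : IsRho n T ρ) (hbij : RhoBij n T ρ) :
    ∃ A B C : Finset ℕ,
      A ∪ B ∪ C = (Finset.range (n - 1)).filter (NearNear n ρ ρ') ∧
      Disjoint A B ∧ Disjoint A C ∧ Disjoint B C ∧
      AcyclicOn (conflictEdge ρ ρ') (A : Set ℕ) ∧
      AcyclicOn (conflictEdge ρ ρ') (B : Set ℕ) ∧
      AcyclicOn (conflictEdge ρ ρ') (C : Set ℕ) ∧
      ∃ Y ⊆ (Finset.range (n - 1)).filter (NearNear n ρ ρ'),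
        AcyclicOn (conflictEdge ρ ρ') (Y : Set ℕ) ∧
        ((Finset.range (n - 1)).filter (NearNear n ρ ρ')).card ≤ 3 * Y.card := by
  set V := (Finset.range (n - 1)).filter (NearNear n ρ ρ')
  have hV (P : ℕ → Prop) : (↑(V.filter P) : Set ℕ) ⊆ {i | NearNear n ρ ρ' i ∧ P i} :=
    fun i hi => by
      obtain ⟨hiV, hP⟩ := Finset.mem_filter.1 hi
      exact ⟨(Finset.mem_filter.1 hiV).2, hP⟩
  have hunion : V.filter (fun i => IsClassA i (ρ i) (ρ' i)) ∪
      V.filter (fun i => IsClassB i (ρ i) (ρ' i)) ∪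
      V.filter (fun i => IsClassC i (ρ i) (ρ' i)) = V := by
    rw [← Finset.filter_or, ← Finset.filter_or, Finset.filter_true_of_mem]
    intro i _
    simp only [IsClassB, IsClassC]
    tauto
  have hacA := (acyclicOn_isClassA (ρ' := ρ') hT.2.1 hρ).mono (hV _)
  have hacB := (acyclicOn_isClassB (ρ' := ρ') hT.2.1 hρ hbij).mono (hV _)
  have hacC := (acyclicOn_isClassC (ρ' := ρ') hT.2.1 hρ hbij).mono (hV _)
  refine ⟨_, _, _, hunion, ?_, ?_, ?_, hacA, hacB, hacC,
    exists_acyclicOn_card_le_three_mul hunion hacA hacB hacC⟩ <;>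
  · rw [Finset.disjoint_filter]
    intro i _
    simp only [IsClassB, IsClassC]
    tauto

/-- the vertex set of the conflict graph `H(T,T')` (the near-near
gaps) can be partitioned into three sets, each inducing an acyclic subgraph; in
particular `H` has an acyclic induced subgraph on at least `|V(H)|/3` vertices. -/
theorem stmt9 (n : ℕ) (T T' : Finset Edge) (ρ ρ' : ℕ → Edge)
    (hT : IsNCSpanningTree n T) (hT' : IsNCSpanningTree n T')
    (hρ : IsRho n T ρ) (hbij : RhoBij n T ρ)
    (hρ' : IsRho n T' ρ') (hbij' : RhoBij n T' ρ') :
    ∃ A B C : Finset ℕ,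
      A ∪ B ∪ C = (Finset.range (n - 1)).filter (NearNear n ρ ρ') ∧
      Disjoint A B ∧ Disjoint A C ∧ Disjoint B C ∧
      AcyclicOn (conflictEdge ρ ρ') (A : Set ℕ) ∧
      AcyclicOn (conflictEdge ρ ρ') (B : Set ℕ) ∧
      AcyclicOn (conflictEdge ρ ρ') (C : Set ℕ) ∧
      ∃ Y ⊆ (Finset.range (n - 1)).filter (NearNear n ρ ρ'),
        AcyclicOn (conflictEdge ρ ρ') (Y : Set ℕ) ∧
        ((Finset.range (n - 1)).filter (NearNear n ρ ρ')).card ≤ 3 * Y.card :=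
  stmt9_general n T ρ ρ' hT hρ hbij

end NCST
end
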